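/- arXiv:2304.00400 — 8 statements merged into one kernel-verified Lean document; each statement's English description precedes it below -/
import Mathlib

section
/- Let f(n) denote the minimum, over all 3-colorings γ : F₂ⁿ → {1,2,3}, of the ratio #{(x,y) ∈ F₂ⁿ × F₂ⁿ : x ≠ 0, y ≠ 0, x ≠ y, and γ(x) = γ(y) = γ(x+y)} / ((2ⁿ−1)·(2ⁿ−2)). Then limsup_{n→∞} f(n) ≤ 1/16. -/
/-!
Colour `(ZMod 2)²` by `(1, _) ↦ 0`, `(0, 1) ↦ 1`, `(0, 0) ↦ 2`. The first two colour classes are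
sum-free, so a monochromatic Schur triple of this colouring lies in the class `{0}`. Pulling it
back along a surjection `ψ : F₂ⁿ → (ZMod 2)²` (two coordinates), every monochromatic pair lies in
`ker ψ`, of size `k = 2ⁿ / 4`, so there are at most `(k - 1)²` of them, and
`(k - 1)² ≤ (4k - 1)(4k - 2) / 16`.
-/

open Filter

section SchurTriples

variable {V C : Type*} [AddGroup V]

noncomputable def monochromaticSchurPairCount (γ : V → C) : ℕ :=
  Nat.card {p : V × V // p.1 ≠ 0 ∧ p.2 ≠ 0 ∧ p.1 ≠ p.2 ∧ γ p.1 = γ p.2 ∧ γ p.2 = γ (p.1 + p.2)}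

def kleinColoring (a : ZMod 2 × ZMod 2) : Fin 3 :=
  if a.1 = 1 then 0 else if a.2 = 1 then 1 else 2

theorem eq_zero_of_kleinColoring_eq {a b : ZMod 2 × ZMod 2}
    (hab : kleinColoring a = kleinColoring b) (hb : kleinColoring b = kleinColoring (a + b)) :
    a = 0 ∧ b = 0 := by
  revert a b
  decide

theorem monochromaticSchurPairCount_comp_le [Finite V] (ψ : V →+ ZMod 2 × ZMod 2) :
    monochromaticSchurPairCount (kleinColoring ∘ ψ) ≤ (Nat.card ψ.ker - 1) ^ 2 := by
  set S : Set V := (ψ.ker : Set V) \ {0}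
  have hS : Nat.card S = Nat.card ψ.ker - 1 := Set.ncard_sdiff_singleton_of_mem ψ.ker.zero_mem
  have hmem : ∀ p : {p : V × V // p.1 ≠ 0 ∧ p.2 ≠ 0 ∧ p.1 ≠ p.2 ∧
      kleinColoring (ψ p.1) = kleinColoring (ψ p.2) ∧
        kleinColoring (ψ p.2) = kleinColoring (ψ (p.1 + p.2))}, p.1.1 ∈ S ∧ p.1.2 ∈ S := by
    rintro ⟨⟨x, y⟩, hx, hy, -, hxy, hsum⟩
    rw [map_add] at hsum
    obtain ⟨hψx, hψy⟩ := eq_zero_of_kleinColoring_eq hxy hsum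
    exact ⟨⟨hψx, hx⟩, ⟨hψy, hy⟩⟩
  calc monochromaticSchurPairCount (kleinColoring ∘ ψ) ≤ Nat.card (S × S) :=
        Nat.card_le_card_of_injective (fun p => (⟨_, (hmem p).1⟩, ⟨_, (hmem p).2⟩))
          fun p q h => by
            simp only [Prod.mk.injEq, Subtype.mk.injEq] at h
            exact Subtype.ext (Prod.ext h.1 h.2)
    _ = (Nat.card ψ.ker - 1) ^ 2 := by rw [Nat.card_prod, hS, sq]

theorem card_ker_mul_four_of_surjective [Finite V] {ψ : V →+ ZMod 2 × ZMod 2}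
    (hψ : Function.Surjective ψ) :
    Nat.card ψ.ker * 4 = Nat.card V := by
  rw [← ψ.ker.card_mul_index, AddSubgroup.index_ker, ψ.range_eq_top.mpr hψ, AddSubgroup.card_top]
  simp

theorem sq_sub_one_div_le_one_div_sixteen (k : ℝ) (hk : 1 ≤ k) :
    (k - 1) ^ 2 / ((4 * k - 1) * (4 * k - 2)) ≤ 1 / 16 := by
  rw [div_le_div_iff₀ (by nlinarith) (by norm_num)]
  nlinarith

theorem monochromaticSchurPairCount_div_le [Finite V] {ψ : V →+ ZMod 2 × ZMod 2}
    (hψ : Function.Surjective ψ) :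
    (monochromaticSchurPairCount (kleinColoring ∘ ψ) : ℝ)
      / ((Nat.card V - 1) * (Nat.card V - 2)) ≤ 1 / 16 := by
  have hk : (1 : ℝ) ≤ Nat.card ψ.ker := by exact_mod_cast Nat.card_pos
  have hV : (Nat.card V : ℝ) = 4 * Nat.card ψ.ker := by
    rw [← card_ker_mul_four_of_surjective hψ]; push_cast; ring
  have hcount : (monochromaticSchurPairCount (kleinColoring ∘ ψ) : ℝ) ≤
      ((Nat.card ψ.ker : ℝ) - 1) ^ 2 := by
    have := monochromaticSchurPairCount_comp_le ψ
    rwa [← Nat.cast_le (α := ℝ), Nat.cast_pow, Nat.cast_sub Nat.card_pos, Nat.cast_one] at this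
  rw [hV]
  calc _ ≤ ((Nat.card ψ.ker : ℝ) - 1) ^ 2
          / ((4 * Nat.card ψ.ker - 1) * (4 * Nat.card ψ.ker - 2)) := by
        gcongr; nlinarith
    _ ≤ 1 / 16 := sq_sub_one_div_le_one_div_sixteen _ hk

end SchurTriples

theorem surjective_prod_evalAddMonoidHom {ι R : Type*} [AddZeroClass R] {i j : ι} (hij : i ≠ j) :
    Function.Surjective ((Pi.evalAddMonoidHom (fun _ => R) i).prod (Pi.evalAddMonoidHom _ j)) := by
  classical
  rintro ⟨a, b⟩
  refine ⟨fun l => if l = i then a else b, ?_⟩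
  simp [hij.symm]

theorem cast_sub_one_mul_cast_sub_two_nonneg (N : ℕ) : 0 ≤ ((N : ℝ) - 1) * (N - 2) := by
  rcases N with _ | _ | N
  · norm_num
  · norm_num
  · push_cast; nlinarith

/-- The minimum fraction of monochromatic Schur triples over all 3-colorings of `F₂ⁿ`
has limsup at most `1/16`. -/
theorem radoMultiplicity_schur_threeColors_F2_upper :
    limsup
      (fun n : ℕ =>
        ⨅ γ : (Fin n → ZMod 2) → Fin 3,
          (Nat.card {p : (Fin n → ZMod 2) × (Fin n → ZMod 2) //
              p.1 ≠ 0 ∧ p.2 ≠ 0 ∧ p.1 ≠ p.2 ∧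
                γ p.1 = γ p.2 ∧ γ p.2 = γ (p.1 + p.2)} : ℝ)
            / (((2 : ℝ) ^ n - 1) * ((2 : ℝ) ^ n - 2)))
      atTop ≤ 1 / 16 := by
  have hcard (n : ℕ) : (Nat.card (Fin n → ZMod 2) : ℝ) = 2 ^ n := by simp
  refine limsup_le_of_le (isCoboundedUnder_le_of_le atTop fun n => Real.iInf_nonneg fun γ =>
    div_nonneg (Nat.cast_nonneg _) (hcard n ▸ cast_sub_one_mul_cast_sub_two_nonneg _)) ?_
  filter_upwards [eventually_ge_atTop 2] with n hn
  obtain ⟨i, j, hij⟩ := (Fin.nontrivial_iff_two_le.mpr hn).exists_pair_ne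
  obtain ⟨ψ, hψ⟩ : ∃ ψ : (Fin n → ZMod 2) →+ ZMod 2 × ZMod 2, Function.Surjective ψ :=
    ⟨_, surjective_prod_evalAddMonoidHom hij⟩
  refine (ciInf_le (Set.finite_range _).bddBelow (kleinColoring ∘ ψ)).trans ?_
  have hratio := monochromaticSchurPairCount_div_le hψ
  rw [hcard] at hratio
  exact hratio
end

section
/- Let f(n) denote the minimum, over all 3-colorings γ : F₃ⁿ → {1,2,3}, of the ratio #{(x,y) ∈ F₃ⁿ × F₃ⁿ : x ≠ 0, y ≠ 0, x ≠ y, and γ(x) = γ(y) = γ(x+y)} / ((3ⁿ−1)·(3ⁿ−2)). Then limsup_{n→∞} f(n) ≤ 7/81; in particular this limsup is strictly smaller than 3⁻², so Schur triples are not 3-common in F₃. -/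
/-!
The coloring of `F₃²` with classes `{0, e₁, e₂}`, `{2e₂, e₁ + e₂, e₁ + 2e₂}` and
`{2e₁, 2e₁ + e₂, 2e₁ + 2e₂}` has only `7` of the `81` ordered
pairs `(x, y)` with `x, y, x + y` of one color. Pulling it back along the projection
`F₃ⁿ → F₃²` onto two coordinates multiplies this count by `9ⁿ⁻²`, so
`f(n) ≤ 7 · 9ⁿ⁻² / ((3ⁿ - 1)(3ⁿ - 2))`, and the right-hand side tends to `7/81`.
-/

open Filter Topology

def IsMonoSchur {G C : Type*} [Add G] (γ : G → C) (x y : G) : Prop :=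
  γ x = γ y ∧ γ y = γ (x + y)

section MonoSchurCount

variable {G H C : Type*} [Add G] [Add H]

theorem card_isMonoSchur_comp_addEquiv (e : G ≃+ H) (γ : H → C) :
    Nat.card {p : G × G // IsMonoSchur (γ ∘ e) p.1 p.2} =
      Nat.card {q : H × H // IsMonoSchur γ q.1 q.2} :=
  Nat.card_congr <| (e.toEquiv.prodCongr e.toEquiv).subtypeEquiv fun p => by
    simp [IsMonoSchur]

theorem card_isMonoSchur_comp_snd (γ : H → C) :
    Nat.card {p : (G × H) × (G × H) // IsMonoSchur (γ ∘ Prod.snd) p.1 p.2} =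
      Nat.card G ^ 2 * Nat.card {q : H × H // IsMonoSchur γ q.1 q.2} := by
  let e : {p : (G × H) × (G × H) // IsMonoSchur (γ ∘ Prod.snd) p.1 p.2} ≃
      (G × G) × {q : H × H // IsMonoSchur γ q.1 q.2} :=
    ((Equiv.prodProdProdComm G H G H).subtypeEquiv
        (q := fun s : (G × G) × (H × H) => IsMonoSchur γ s.2.1 s.2.2) fun _ => Iff.rfl).trans <|
      ((Equiv.prodComm _ _).subtypeEquiv
        (q := fun s : (H × H) × (G × G) => IsMonoSchur γ s.1.1 s.1.2) fun _ => Iff.rfl).trans <|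
      (Equiv.prodSubtypeFstEquivSubtypeProd (p := fun q : H × H => IsMonoSchur γ q.1 q.2)).trans
        (Equiv.prodComm _ _)
  rw [Nat.card_congr e, Nat.card_prod, Nat.card_prod, sq]

end MonoSchurCount

theorem card_nondegenerate_isMonoSchur_le {G C : Type*} [AddZeroClass G] [Finite G] (γ : G → C) :
    Nat.card {p : G × G // p.1 ≠ 0 ∧ p.2 ≠ 0 ∧ p.1 ≠ p.2 ∧ IsMonoSchur γ p.1 p.2} ≤
      Nat.card {p : G × G // IsMonoSchur γ p.1 p.2} :=
  Nat.card_le_card_of_injective (Subtype.map id fun _ h => h.2.2.2)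
    (Subtype.map_injective _ Function.injective_id)

def Fin.appendAddEquiv (M : Type*) [Add M] (m n : ℕ) :
    (Fin m → M) × (Fin n → M) ≃+ (Fin (m + n) → M) where
  toEquiv := Fin.appendEquiv m n
  map_add' x y := by
    ext i
    refine Fin.addCases (fun i => ?_) (fun i => ?_) i <;> simp

def sparseSchurColoring (u : Fin 2 → ZMod 3) : Fin 3 :=
  if u 0 = 2 then 2
  else if u 0 = 0 then (if u 1 = 2 then 1 else 0)
  else (if u 1 = 0 then 0 else 1)

theorem card_isMonoSchur_sparseSchurColoring :
    Nat.card {q : (Fin 2 → ZMod 3) × (Fin 2 → ZMod 3) //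
      IsMonoSchur sparseSchurColoring q.1 q.2} = 7 := by
  unfold IsMonoSchur
  rw [Nat.card_eq_fintype_card]
  decide

theorem exists_coloring_card_nondegenerate_isMonoSchur_le (m : ℕ) :
    ∃ γ : (Fin (m + 2) → ZMod 3) → Fin 3,
      Nat.card {p : (Fin (m + 2) → ZMod 3) × (Fin (m + 2) → ZMod 3) //
        p.1 ≠ 0 ∧ p.2 ≠ 0 ∧ p.1 ≠ p.2 ∧ IsMonoSchur γ p.1 p.2} ≤ 7 * 9 ^ m := by
  refine ⟨(sparseSchurColoring ∘ Prod.snd) ∘ (Fin.appendAddEquiv (ZMod 3) m 2).symm,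
    (card_nondegenerate_isMonoSchur_le _).trans_eq ?_⟩
  rw [card_isMonoSchur_comp_addEquiv, card_isMonoSchur_comp_snd,
    card_isMonoSchur_sparseSchurColoring, Nat.card_fun, Nat.card_zmod, Nat.card_fin, sq,
    ← mul_pow]
  norm_num [mul_comm]

theorem three_pow_sub_one_mul_sub_two_pos {n : ℕ} (hn : 1 ≤ n) :
    0 < ((3 : ℝ) ^ n - 1) * ((3 : ℝ) ^ n - 2) := by
  have : (3 : ℝ) ≤ 3 ^ n := by simpa using pow_le_pow_right₀ (by norm_num : (1 : ℝ) ≤ 3) hn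
  exact mul_pos (by linarith) (by linarith)

theorem tendsto_nine_pow_div_three_pow_sub_one_mul_sub_two :
    Tendsto (fun n : ℕ => (9 : ℝ) ^ n / (((3 : ℝ) ^ n - 1) * ((3 : ℝ) ^ n - 2))) atTop (𝓝 1) := by
  have ht : Tendsto (fun n : ℕ => ((3 : ℝ) ^ n)⁻¹) atTop (𝓝 0) :=
    tendsto_inv_atTop_zero.comp (tendsto_pow_atTop_atTop_of_one_lt (by norm_num))
  have hlim := ((tendsto_const_nhds (x := (1 : ℝ)).sub ht).mul
    (tendsto_const_nhds (x := (1 : ℝ)).sub (ht.const_mul 2))).inv₀ (by norm_num)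
  rw [show ((1 - 0 : ℝ) * (1 - 2 * 0))⁻¹ = 1 by norm_num] at hlim
  refine hlim.congr fun n => ?_
  have h3 : (3 : ℝ) ^ n ≠ 0 := by positivity
  rw [show (9 : ℝ) ^ n = 3 ^ n * 3 ^ n by rw [← mul_pow]; norm_num]
  field_simp

theorem limsup_le_of_eventually_le_of_tendsto {α : Type*} {l : Filter α} [l.NeBot]
    {u v : α → ℝ} {a b : ℝ} (hb : ∀ᶠ x in l, b ≤ u x) (huv : u ≤ᶠ[l] v)
    (hv : Tendsto v l (𝓝 a)) : limsup u l ≤ a :=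
  hv.limsup_eq ▸ limsup_le_limsup huv (isCoboundedUnder_le_of_eventually_le l hb)
    hv.isBoundedUnder_le

/-- The minimum fraction of monochromatic Schur triples over all 3-colorings of `F₃ⁿ`
has limsup at most `7/81`; in particular it is strictly smaller than `3⁻²`,
so Schur triples are not 3-common in `F₃`. -/
theorem radoMultiplicity_schur_threeColors_F3_upper :
    limsup
        (fun n : ℕ =>
          ⨅ γ : (Fin n → ZMod 3) → Fin 3,
            (Nat.card {p : (Fin n → ZMod 3) × (Fin n → ZMod 3) //
                p.1 ≠ 0 ∧ p.2 ≠ 0 ∧ p.1 ≠ p.2 ∧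
                  γ p.1 = γ p.2 ∧ γ p.2 = γ (p.1 + p.2)} : ℝ)
              / (((3 : ℝ) ^ n - 1) * ((3 : ℝ) ^ n - 2)))
        atTop ≤ 7 / 81 ∧
    limsup
        (fun n : ℕ =>
          ⨅ γ : (Fin n → ZMod 3) → Fin 3,
            (Nat.card {p : (Fin n → ZMod 3) × (Fin n → ZMod 3) //
                p.1 ≠ 0 ∧ p.2 ≠ 0 ∧ p.1 ≠ p.2 ∧
                  γ p.1 = γ p.2 ∧ γ p.2 = γ (p.1 + p.2)} : ℝ)
              / (((3 : ℝ) ^ n - 1) * ((3 : ℝ) ^ n - 2)))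
        atTop < ((3 : ℝ) ^ 2)⁻¹ := by
  refine ⟨?h, lt_of_le_of_lt ?h (by norm_num)⟩
  refine limsup_le_of_eventually_le_of_tendsto (b := 0) ?_ ?_
    (by simpa using tendsto_nine_pow_div_three_pow_sub_one_mul_sub_two.const_mul (7 / 81 : ℝ))
  · filter_upwards [eventually_ge_atTop 1] with n hn
    exact Real.iInf_nonneg fun γ =>
      div_nonneg (Nat.cast_nonneg _) (three_pow_sub_one_mul_sub_two_pos hn).le
  · filter_upwards [eventually_ge_atTop 2] with n hn
    obtain ⟨m, rfl⟩ := Nat.exists_eq_add_of_le' hn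
    obtain ⟨γ, hγ⟩ := exists_coloring_card_nondegenerate_isMonoSchur_le m
    have hD := three_pow_sub_one_mul_sub_two_pos (n := m + 2) (by omega)
    calc _ ≤ _ := ciInf_le (Set.finite_range _).bddBelow γ
      _ ≤ 7 * 9 ^ m / (((3 : ℝ) ^ (m + 2) - 1) * ((3 : ℝ) ^ (m + 2) - 2)) := by
        gcongr
        exact_mod_cast hγ
      _ = _ := by ring
end

section
/- There exists a 3-coloring γ : F₃³ → {1,2,3} containing no monochromatic 3-AP, i.e. such that there is no pair (a,d) ∈ F₃³ × F₃³ with d ≠ 0 and γ(a) = γ(a+d) = γ(a+2d). -/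
private def c3 : ZMod 3 → ZMod 3 → ZMod 3 → Fin 3 :=
  fun x => ![![![0,0,1],![0,0,1],![1,1,2]],
             ![![0,0,1],![2,2,0],![2,2,0]],
             ![![1,1,2],![2,2,0],![1,1,2]]] x

private lemma c3_key : ∀ x y z u v w : ZMod 3, ¬(u = 0 ∧ v = 0 ∧ w = 0) →
    ¬(c3 x y z = c3 (x+u) (y+v) (z+w) ∧
      c3 (x+u) (y+v) (z+w) = c3 (x+u+u) (y+v+v) (z+w+w)) := by decide

/-- There is a 3-coloring of `F₃³` with no monochromatic 3-term arithmetic progression. -/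
theorem exists_threeAP_free_threeColoring_F3_dim3 :
    ∃ γ : (Fin 3 → ZMod 3) → Fin 3,
      ∀ a d : Fin 3 → ZMod 3, d ≠ 0 →
        ¬(γ a = γ (a + d) ∧ γ (a + d) = γ (a + d + d)) := by
  refine ⟨fun v => c3 (v 0) (v 1) (v 2), fun a d hd h => ?_⟩
  have hd' : ¬(d 0 = 0 ∧ d 1 = 0 ∧ d 2 = 0) := by
    rintro ⟨h0, h1, h2⟩
    apply hd; funext i; fin_cases i <;> assumption
  exact c3_key (a 0) (a 1) (a 2) (d 0) (d 1) (d 2) hd'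
    ⟨by simpa [Pi.add_apply] using h.1, by simpa [Pi.add_apply] using h.2⟩
end

section
/- Every 3-coloring γ : F₃⁴ → {1,2,3} contains a monochromatic 3-AP, i.e. there exist a, d ∈ F₃⁴ with d ≠ 0 and γ(a) = γ(a+d) = γ(a+2d). -/
/-!
A colour class without monochromatic 3-APs is 3-AP-free, and one of the three classes has at
least 27 of the 81 points, so it suffices that 3-AP-free subsets of `F₃⁴` have at most 26 points.
For a 3-AP-free `T ⊆ F_q^{n+1}`, count the triples `(v, x, y)` with `x, y ∈ T` and
`v ⬝ᵥ x = v ⬝ᵥ y`. Counting over `(x, y)` gives exactly `q ^ n * |T| * (|T| + q - 1)`. Counting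
over `v ≠ 0` gives the sum of the squared sizes of the `q` slices `{x ∈ T | v ⬝ᵥ x = c}`, each
a 3-AP-free subset of a hyperplane `≅ F_q^n`. So a bound on the Roth number of `F_q^n` bounds that
of `F_q^{n+1}`, and starting from `2` in `F₃¹` we get `4`, `9` and finally `26`.
-/

open Finset
open scoped Pointwise

namespace Finset

/-- Equality holds when all but one of the `a i` equal `B`. -/
lemma sum_sq_le_of_forall_le {ι : Type*} (s : Finset ι) (a : ι → ℤ) (B : ℤ)
    (h : ∀ i ∈ s, a i ≤ B) :
    ∑ i ∈ s, a i ^ 2 ≤ (#s - 1) * B ^ 2 + (∑ i ∈ s, a i - (#s - 1) * B) ^ 2 := by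
  have hgap := sum_sq_le_sq_sum_of_nonneg (s := s) (f := fun i ↦ B - a i)
    fun i hi ↦ sub_nonneg.2 (h i hi)
  simp only [sub_sq, sum_add_distrib, sum_sub_distrib, sum_const, nsmul_eq_mul,
    ← mul_sum] at hgap
  nlinarith [hgap]

lemma sum_card_filter_sq {α β : Type*} [DecidableEq β] [Fintype β] (s : Finset α) (f : α → β) :
    ∑ b, #{x ∈ s | f x = b} ^ 2 = #{p ∈ s ×ˢ s | f p.1 = f p.2} := by
  calc ∑ b, #{x ∈ s | f x = b} ^ 2
      = ∑ b, ∑ x ∈ s with f x = b, #{y ∈ s | f y = b} := by simp [sq]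
    _ = ∑ x ∈ s, #{y ∈ s | f y = f x} := sum_fiberwise' s f fun b ↦ #{y ∈ s | f y = b}
    _ = #{p ∈ s ×ˢ s | f p.1 = f p.2} := by
      rw [card_filter, sum_product]
      refine sum_congr rfl fun x _ ↦ ?_
      rw [card_filter]
      simp only [eq_comm]

end Finset

lemma injOn_funLeft_succAbove_dotProduct_eq {R : Type*} [CommRing R] [NoZeroDivisors R] {n : ℕ}
    {v : Fin (n + 1) → R} {i : Fin (n + 1)} (hi : v i ≠ 0) (c : R) :
    Set.InjOn (LinearMap.funLeft R R i.succAbove) {x | v ⬝ᵥ x = c} := by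
  intro x hx y hy hxy
  have hoff (k : Fin n) : x (i.succAbove k) = y (i.succAbove k) := congrFun hxy k
  have hdot : v i * (x i - y i) = 0 := by
    have := congrArg (· - v ⬝ᵥ y) (hx.trans hy.symm)
    simp only [dotProduct, sub_self, ← sum_sub_distrib, ← mul_sub] at this
    simpa [Fin.sum_univ_succAbove _ i, hoff] using this
  have hi' : x i = y i := sub_eq_zero.1 ((mul_eq_zero.1 hdot).resolve_left hi)
  funext k
  exact Fin.succAboveCases (α := fun k ↦ x k = y k) i hi' hoff k

lemma threeAPFree_preimage_singleton {G ι : Type*} [AddCommGroup G] {γ : G → ι}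
    (hγ : ∀ a d, d ≠ 0 → γ a = γ (a + d) → γ (a + d) ≠ γ (a + d + d)) (c : ι) :
    ThreeAPFree (γ ⁻¹' {c}) := by
  intro a (ha : γ a = c) b (hb : γ b = c) e (he : γ e = c) habe
  by_contra hab
  have hb' : a + (b - a) = b := add_sub_cancel a b
  have he' : a + (b - a) + (b - a) = e := by rw [hb', eq_sub_of_add_eq' habe]; abel
  exact hγ a (b - a) (sub_ne_zero.2 (Ne.symm hab)) (by rw [hb', ha, hb]) (by rw [he', hb', hb, he])

section Slices

variable {K : Type*} [Field K] [Fintype K] [DecidableEq K] {n : ℕ}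

lemma card_filter_dotProduct_le_addRothNumber {T : Finset (Fin (n + 1) → K)}
    (hT : ThreeAPFree (T : Set (Fin (n + 1) → K))) {v : Fin (n + 1) → K} (hv : v ≠ 0) (c : K) :
    #{x ∈ T | v ⬝ᵥ x = c} ≤ addRothNumber (univ : Finset (Fin n → K)) := by
  obtain ⟨i, hi⟩ := Function.ne_iff.1 hv
  set S := T.filter (v ⬝ᵥ · = c)
  set f := LinearMap.funLeft K K (Fin.succAbove i)
  have hS : (S : Set _) ⊆ {x | v ⬝ᵥ x = c} := fun x hx ↦ (mem_filter.1 hx).2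
  have hSS : (S : Set (Fin (n + 1) → K)) + (S : Set _) ⊆ {x | v ⬝ᵥ x = c + c} := by
    rintro _ ⟨x, hx, y, hy, rfl⟩
    rw [Set.mem_ofPred_eq, dotProduct_add, (hS hx : v ⬝ᵥ x = c), (hS hy : v ⬝ᵥ y = c)]
  have hfS : ThreeAPFree (f '' S) :=
    (hT.mono (coe_subset.2 (filter_subset _ _))).image' f
      ((injOn_funLeft_succAbove_dotProduct_eq hi _).mono hSS)
  calc #S = #(S.image f) :=
        (card_image_of_injOn ((injOn_funLeft_succAbove_dotProduct_eq hi c).mono hS)).symm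
    _ ≤ _ := ThreeAPFree.le_addRothNumber (by simpa using hfS) (subset_univ _)

lemma card_filter_dotProduct_eq_zero {d : Fin (n + 1) → K} (hd : d ≠ 0) :
    #{v | v ⬝ᵥ d = 0} = Fintype.card K ^ n := by
  classical
  let φ := dotProductEquiv K (Fin (n + 1)) d
  have hφ : φ ≠ 0 := (LinearEquiv.map_ne_zero_iff _).2 hd
  have hrank : Module.finrank K (LinearMap.ker φ) = n := by
    have := Module.Dual.finrank_ker_add_one_of_ne_zero hφ
    simp only [Module.finrank_fintype_fun_eq_card, Fintype.card_fin] at this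
    omega
  calc #{v | v ⬝ᵥ d = 0} = Fintype.card (LinearMap.ker φ) := by
        rw [Fintype.card_subtype]
        simp [φ, dotProduct_comm]
    _ = Fintype.card K ^ n := by rw [Module.card_eq_pow_finrank (K := K), hrank]

lemma card_filter_dotProduct_eq_dotProduct (x y : Fin (n + 1) → K) :
    #{v | v ⬝ᵥ x = v ⬝ᵥ y} =
      Fintype.card K ^ n + if x = y then (Fintype.card K - 1) * Fintype.card K ^ n else 0 := by
  split_ifs with hxy
  · subst hxy
    rw [filter_true_of_mem fun _ _ ↦ rfl, card_univ, Fintype.card_fun, Fintype.card_fin,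
      pow_succ', add_comm, ← Nat.succ_mul, Nat.succ_eq_add_one,
      Nat.sub_add_cancel Fintype.card_pos]
  · simpa [← sub_eq_zero, ← dotProduct_sub] using
      card_filter_dotProduct_eq_zero (sub_ne_zero.2 hxy)

lemma sum_card_filter_dotProduct_eq (T : Finset (Fin (n + 1) → K)) :
    ∑ v, #{p ∈ T ×ˢ T | v ⬝ᵥ p.1 = v ⬝ᵥ p.2} =
      Fintype.card K ^ n * #T ^ 2 + (Fintype.card K - 1) * Fintype.card K ^ n * #T := by
  calc ∑ v, #{p ∈ T ×ˢ T | v ⬝ᵥ p.1 = v ⬝ᵥ p.2}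
      = ∑ p ∈ T ×ˢ T, #{v | v ⬝ᵥ p.1 = v ⬝ᵥ p.2} := by
        simp only [card_filter]
        exact sum_comm
    _ = ∑ p ∈ T ×ˢ T, (Fintype.card K ^ n +
          if p.1 = p.2 then (Fintype.card K - 1) * Fintype.card K ^ n else 0) :=
        sum_congr rfl fun p _ ↦ card_filter_dotProduct_eq_dotProduct p.1 p.2
    _ = _ := by
      rw [sum_add_distrib, sum_const, card_product, sum_ite, sum_const_zero, sum_const,
        ← diag_eq_filter, diag_card]
      simp [sq, mul_comm]

theorem addRothNumber_univ_succ_lt {B s : ℕ}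
    (hB : addRothNumber (univ : Finset (Fin n → K)) ≤ B)
    (hs : (s : ℤ) ^ 2 + ((Fintype.card K : ℤ) ^ (n + 1) - 1) *
        (((Fintype.card K : ℤ) - 1) * B ^ 2 + (s - ((Fintype.card K : ℤ) - 1) * B) ^ 2) <
      (Fintype.card K : ℤ) ^ n * s ^ 2 + ((Fintype.card K : ℤ) - 1) * Fintype.card K ^ n * s) :
    addRothNumber (univ : Finset (Fin (n + 1) → K)) < s := by
  set q : ℤ := (Fintype.card K : ℤ) with hq
  set M : ℤ := (q - 1) * B ^ 2 + (s - (q - 1) * B) ^ 2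
  refine addRothNumber_lt_of_forall_not_threeAPFree fun T hTs hT ↦ ?_
  have hTcard : #T = s := (mem_powersetCard.1 hTs).2
  have hslice (v : Fin (n + 1) → K) (hv : v ≠ 0) :
      (#{p ∈ T ×ˢ T | v ⬝ᵥ p.1 = v ⬝ᵥ p.2} : ℤ) ≤ M := by
    have hsum : ∑ c, (#{x ∈ T | v ⬝ᵥ x = c} : ℤ) = s := by
      rw [← hTcard, card_eq_sum_card_fiberwise (f := (v ⬝ᵥ ·)) fun _ _ ↦ mem_univ _,
        Nat.cast_sum]
    have := sum_sq_le_of_forall_le univ (fun c ↦ (#{x ∈ T | v ⬝ᵥ x = c} : ℤ)) B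
      fun c _ ↦ mod_cast (card_filter_dotProduct_le_addRothNumber hT hv c).trans hB
    rw [← sum_card_filter_sq]
    simpa [hsum, hq] using this
  have hzero : #{p ∈ T ×ˢ T | (0 : Fin (n + 1) → K) ⬝ᵥ p.1 = 0 ⬝ᵥ p.2} = s ^ 2 := by
    simp [hTcard, sq]
  have hrest : ∑ v ∈ {0}ᶜ, (#{p ∈ T ×ˢ T | v ⬝ᵥ p.1 = v ⬝ᵥ p.2} : ℤ) ≤ (q ^ (n + 1) - 1) * M :=
    calc _ ≤ ∑ _v ∈ ({0}ᶜ : Finset (Fin (n + 1) → K)), M :=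
          sum_le_sum fun v hv ↦ hslice v (by simpa using hv)
      _ = (q ^ (n + 1) - 1) * M := by
          simp [card_compl, hq, Nat.cast_pred (pow_pos Fintype.card_pos _)]
  have hcount := congrArg (Nat.cast : ℕ → ℤ) (sum_card_filter_dotProduct_eq T)
  rw [Fintype.sum_eq_add_sum_compl 0, hzero] at hcount
  push_cast [Nat.cast_pred Fintype.card_pos, hTcard] at hcount
  linarith

end Slices

lemma addRothNumber_univ_fin_four_zmod_three_le :
    addRothNumber (univ : Finset (Fin 4 → ZMod 3)) ≤ 26 := by
  have h1 : addRothNumber (univ : Finset (Fin 1 → ZMod 3)) ≤ 2 := by decide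
  have h2 : addRothNumber (univ : Finset (Fin 2 → ZMod 3)) < 5 :=
    addRothNumber_univ_succ_lt (B := 2) h1 (by norm_num)
  have h3 : addRothNumber (univ : Finset (Fin 3 → ZMod 3)) < 10 :=
    addRothNumber_univ_succ_lt (B := 4) (by omega) (by norm_num)
  have h4 : addRothNumber (univ : Finset (Fin 4 → ZMod 3)) < 27 :=
    addRothNumber_univ_succ_lt (B := 9) (by omega) (by norm_num)
  omega

/-- Every 3-coloring of `F₃⁴` contains a monochromatic 3-term arithmetic progression. -/
theorem exists_monochromatic_threeAP_threeColoring_F3_dim4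
    (γ : (Fin 4 → ZMod 3) → Fin 3) :
    ∃ a d : Fin 4 → ZMod 3, d ≠ 0 ∧ γ a = γ (a + d) ∧ γ (a + d) = γ (a + d + d) := by
  by_contra! hγ
  obtain ⟨c, hc⟩ := Fintype.exists_lt_card_fiber_of_mul_lt_card γ (n := 26) (by simp)
  have hfree : ThreeAPFree ((univ.filter (γ · = c) : Finset _) : Set (Fin 4 → ZMod 3)) := by
    simpa [Set.preimage, Set.mem_singleton_iff] using threeAPFree_preimage_singleton hγ c
  have := (hfree.le_addRothNumber (subset_univ _)).trans addRothNumber_univ_fin_four_zmod_three_le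
  omega
end

section
/- Let F be a finite field with |F| = q and let 0 ≤ k ≤ n be integers. Then the number N of k-dimensional F-linear subspaces of Fⁿ satisfies N · ∏_{i=0}^{k−1} (q^k − q^i) = ∏_{i=0}^{k−1} (q^n − q^i); equivalently, N equals the Gaussian binomial coefficient binom(n,k)_q. -/
/-!
Count the linearly independent `k`-tuples in `Fⁿ` twice. Directly there are
`∏_{i<k} (q^n − q^i)` of them. Grouped by the subspace they span, the tuples spanning a given
`k`-dimensional `V` are exactly the linearly independent `k`-tuples of `V`, of which there are
`∏_{i<k} (q^k − q^i)`, independently of `V`.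
-/

open Module Submodule

section LinearIndependent

variable {K M : Type*} [DivisionRing K] [AddCommGroup M] [Module K M] {k : ℕ}

def linearIndependentSpanEqEquiv [FiniteDimensional K M] (V : Submodule K M)
    (hV : finrank K V = k) :
    {s : {s : Fin k → M // LinearIndependent K s} // span K (Set.range s.1) = V} ≃
      {t : Fin k → V // LinearIndependent K t} where
  toFun s := ⟨fun i => ⟨s.1.1 i, s.2.le (subset_span ⟨i, rfl⟩)⟩,
    .of_comp V.subtype s.1.2⟩
  invFun t := ⟨⟨V.subtype ∘ t.1, t.2.map' _ V.ker_subtype⟩, by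
    rw [Set.range_comp, ← map_span, t.2.span_eq_top_of_card_eq_finrank' (by simp [hV]),
      Submodule.map_top, range_subtype]⟩
  left_inv _ := rfl
  right_inv _ := rfl

/-- Sorts linearly independent `k`-tuples by the subspace they span. -/
def linearIndependentEquivSigmaFinrankEq [FiniteDimensional K M] :
    {s : Fin k → M // LinearIndependent K s} ≃
      Σ V : {V : Submodule K M // finrank K V = k}, {t : Fin k → V.1 // LinearIndependent K t} :=
  (Equiv.sigmaFiberEquiv fun s : {s : Fin k → M // LinearIndependent K s} =>
      (⟨span K (Set.range s.1), by simp [finrank_span_eq_card s.2]⟩ :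
        {V : Submodule K M // finrank K V = k})).symm.trans <|
    Equiv.sigmaCongrRight fun V =>
      (Equiv.subtypeEquivRight fun _ => Subtype.ext_iff).trans
        (linearIndependentSpanEqEquiv V.1 V.2)

theorem card_submodules_of_finrank_mul_eq [Fintype K] [Finite M] (hk : k ≤ finrank K M) :
    Nat.card {V : Submodule K M // finrank K V = k} *
        ∏ i ∈ Finset.range k, (Fintype.card K ^ k - Fintype.card K ^ i) =
      ∏ i ∈ Finset.range k, (Fintype.card K ^ finrank K M - Fintype.card K ^ i) := by
  have : Fintype {V : Submodule K M // finrank K V = k} := Fintype.ofFinite _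
  have card_fiber (V : {V : Submodule K M // finrank K V = k}) :
      Nat.card {t : Fin k → V.1 // LinearIndependent K t} =
        ∏ i : Fin k, (Fintype.card K ^ k - Fintype.card K ^ i.val) := by
    rw [card_linearIndependent V.2.ge, V.2]
  rw [← Fin.prod_univ_eq_prod_range, ← Fin.prod_univ_eq_prod_range,
    ← card_linearIndependent hk, Nat.card_congr linearIndependentEquivSigmaFinrankEq, Nat.card_sigma,
    Finset.sum_congr rfl fun V _ => card_fiber V, Finset.sum_const, smul_eq_mul, Finset.card_univ,
    Nat.card_eq_fintype_card]

end LinearIndependent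

/-- Counting `k`-dimensional linear subspaces of `Fⁿ` over a finite field `F` with `q`
elements: the number `N` of such subspaces satisfies
`N · ∏_{i<k} (q^k − q^i) = ∏_{i<k} (q^n − q^i)`, i.e. `N` is the Gaussian binomial
coefficient `binom(n,k)_q`. -/
theorem card_subspaces_mul_eq (F : Type*) [Field F] [Fintype F] (q : ℕ)
    (hq : Fintype.card F = q) (k n : ℕ) (hkn : k ≤ n) :
    Nat.card {V : Submodule F (Fin n → F) // Module.finrank F V = k} *
        ∏ i ∈ Finset.range k, (q ^ k - q ^ i) =
      ∏ i ∈ Finset.range k, (q ^ n - q ^ i) := by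
  subst hq
  simpa using card_submodules_of_finrank_mul_eq (K := F) (M := Fin n → F) (by simpa using hkn)
end

section
/- Let F be a finite field, let c ≥ 1, let 0 ≤ k ≤ n' ≤ n be integers, and let γ : Fⁿ → {1,…,c} and δ : F^k → {1,…,c} be colorings. Write Inj(a,b) for the set of injective linear maps F^a → F^b, and say a coloring f of F^k is isomorphic to δ if f = δ∘e for some linear automorphism e of F^k. Then #{ψ ∈ Inj(k,n) : γ∘ψ isomorphic to δ} · |Inj(n',n)| · |Inj(k,n')| = |Inj(k,n)| · #{(φ,ψ') ∈ Inj(n',n) × Inj(k,n') : γ∘φ∘ψ' isomorphic to δ}. -/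
/-!
Double counting along composition `(φ, ψ') ↦ φ ∘ ψ'` from pairs of injective maps
`F^k → F^{n'} → Fⁿ` to injective maps `F^k → Fⁿ`. Any two injective linear maps out of a
finite-dimensional space differ by an automorphism of the target, and post-composing `φ` with
that automorphism carries one fibre of the composition bijectively onto the other. So all
fibres have the same size, and counting pairs whose composite has a property `P` is counting
injective maps with `P`, scaled by the common fibre size.
-/

open Function

theorem Nat.card_subtype_comp_mul_card_eq {α β : Type*} [Finite α] [Finite β] (f : α → β)
    (hf : ∀ b₁ b₂, Nat.card {a // f a = b₁} = Nat.card {a // f a = b₂}) (P : β → Prop) :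
    Nat.card {a // P (f a)} * Nat.card β = Nat.card {b // P b} * Nat.card α := by
  classical
  cases nonempty_fintype β
  rcases isEmpty_or_nonempty β with hβ | ⟨⟨b₀⟩⟩
  · have : IsEmpty α := f.isEmpty
    simp
  have card_eq_mul_fiber (Q : β → Prop) :
      Nat.card {a // Q (f a)} = Nat.card {b // Q b} * Nat.card {a // f a = b₀} := by
    rw [← Nat.card_congr (Equiv.sigmaSubtypeFiberEquivSubtype f fun _ => Iff.rfl), Nat.card_sigma,
      Finset.sum_congr rfl fun b _ => hf b.1 b₀, Finset.sum_const, Finset.card_univ, smul_eq_mul,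
      ← Nat.card_eq_fintype_card]
  have card_eq_mul : Nat.card α = Nat.card β * Nat.card {a // f a = b₀} := by
    simpa using card_eq_mul_fiber fun _ => True
  rw [card_eq_mul_fiber P, card_eq_mul]
  ring

section

variable {F U V W : Type*} [Field F] [AddCommGroup U] [Module F U] [AddCommGroup V] [Module F V]
  [AddCommGroup W] [Module F W]

theorem LinearMap.exists_linearEquiv_comp_eq_of_injective [FiniteDimensional F U]
    {ψ₁ ψ₂ : U →ₗ[F] V} (h₁ : Injective ψ₁) (h₂ : Injective ψ₂) :
    ∃ g : V ≃ₗ[F] V, g.toLinearMap ∘ₗ ψ₁ = ψ₂ := by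
  obtain ⟨g, hg⟩ := Submodule.exists_linearEquiv_restrict_eq
    ((LinearEquiv.ofInjective ψ₁ h₁).symm ≪≫ₗ LinearEquiv.ofInjective ψ₂ h₂)
  refine ⟨g, LinearMap.ext fun x => ?_⟩
  simpa using (hg (LinearEquiv.ofInjective ψ₁ h₁ x)).symm

variable (F U V W) in
abbrev InjectivePair := {p : (V →ₗ[F] W) × (U →ₗ[F] V) // Injective p.1 ∧ Injective p.2}

namespace InjectivePair

def comp (p : InjectivePair F U V W) : {χ : U →ₗ[F] W // Injective χ} :=
  ⟨p.1.1 ∘ₗ p.1.2, p.2.1.comp p.2.2⟩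

def postcomp (g : W ≃ₗ[F] W) : InjectivePair F U V W ≃ InjectivePair F U V W where
  toFun p := ⟨(g.toLinearMap ∘ₗ p.1.1, p.1.2), g.injective.comp p.2.1, p.2.2⟩
  invFun p := ⟨(g.symm.toLinearMap ∘ₗ p.1.1, p.1.2), g.symm.injective.comp p.2.1, p.2.2⟩
  left_inv p := by ext <;> simp
  right_inv p := by ext <;> simp

theorem card_comp_fiber_eq [FiniteDimensional F U] (χ₁ χ₂ : {χ : U →ₗ[F] W // Injective χ}) :
    Nat.card {p : InjectivePair F U V W // p.comp = χ₁} =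
      Nat.card {p : InjectivePair F U V W // p.comp = χ₂} := by
  obtain ⟨g, hg⟩ := LinearMap.exists_linearEquiv_comp_eq_of_injective χ₁.2 χ₂.2
  refine Nat.card_congr ((postcomp g).subtypeEquiv fun p => ?_)
  simp only [comp, postcomp, Equiv.coe_fn_mk, Subtype.ext_iff, ← hg, LinearMap.comp_assoc]
  exact (LinearMap.cancel_left g.injective).symm

end InjectivePair

theorem card_injective_and_mul_card_mul_card_eq [Finite U] [Finite V] [Finite W]
    (P : (U →ₗ[F] W) → Prop) :
    Nat.card {χ : U →ₗ[F] W // Injective χ ∧ P χ} * Nat.card {φ : V →ₗ[F] W // Injective φ} *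
        Nat.card {ψ : U →ₗ[F] V // Injective ψ} =
      Nat.card {χ : U →ₗ[F] W // Injective χ} *
        Nat.card {p : (V →ₗ[F] W) × (U →ₗ[F] V) //
          Injective p.1 ∧ Injective p.2 ∧ P (p.1 ∘ₗ p.2)} := by
  have : Finite (U →ₗ[F] W) := .of_injective _ DFunLike.coe_injective
  have : Finite (V →ₗ[F] W) := .of_injective _ DFunLike.coe_injective
  have : Finite (U →ₗ[F] V) := .of_injective _ DFunLike.coe_injective
  have key := Nat.card_subtype_comp_mul_card_eq (InjectivePair.comp (V := V))
    InjectivePair.card_comp_fiber_eq fun χ => P χ.1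
  rw [← Nat.card_congr (Equiv.subtypeSubtypeEquivSubtypeInter _ P), mul_assoc, ← Nat.card_prod,
    ← Nat.card_congr Equiv.subtypeProdEquivProd, ← key, mul_comm]
  exact congrArg _ <| Nat.card_congr <|
    (Equiv.subtypeSubtypeEquivSubtypeInter _
        fun p : (V →ₗ[F] W) × (U →ₗ[F] V) => P (p.1 ∘ₗ p.2)).trans
      (Equiv.subtypeEquivRight fun _ => and_assoc)

end

theorem density_averaging_identity_general (F : Type*) [Field F] [Fintype F]
    (c : ℕ) (k n' n : ℕ)
    (γ : (Fin n → F) → Fin c) (δ : (Fin k → F) → Fin c) :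
    Nat.card {ψ : (Fin k → F) →ₗ[F] (Fin n → F) //
        Function.Injective ⇑ψ ∧
          ∃ e : (Fin k → F) ≃ₗ[F] (Fin k → F), γ ∘ ⇑ψ = δ ∘ ⇑e} *
      Nat.card {φ : (Fin n' → F) →ₗ[F] (Fin n → F) // Function.Injective ⇑φ} *
      Nat.card {ψ' : (Fin k → F) →ₗ[F] (Fin n' → F) // Function.Injective ⇑ψ'} =
    Nat.card {ψ : (Fin k → F) →ₗ[F] (Fin n → F) // Function.Injective ⇑ψ} *
      Nat.card {p : ((Fin n' → F) →ₗ[F] (Fin n → F)) × ((Fin k → F) →ₗ[F] (Fin n' → F)) //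
        Function.Injective ⇑p.1 ∧ Function.Injective ⇑p.2 ∧
          ∃ e : (Fin k → F) ≃ₗ[F] (Fin k → F), γ ∘ ⇑p.1 ∘ ⇑p.2 = δ ∘ ⇑e} :=
  card_injective_and_mul_card_mul_card_eq fun ψ =>
    ∃ e : (Fin k → F) ≃ₗ[F] (Fin k → F), γ ∘ ⇑ψ = δ ∘ ⇑e

/-- The averaging (double-counting) identity for densities of a coloring `δ` of `F^k`
inside a coloring `γ` of `Fⁿ`: counting injective linear maps `F^k → Fⁿ` inducing a
copy of `δ`, versus first choosing a random `n'`-dimensional subspace and then a copy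
of `δ` inside it. -/
theorem density_averaging_identity (F : Type*) [Field F] [Fintype F]
    (c : ℕ) (hc : 1 ≤ c) (k n' n : ℕ) (hk : k ≤ n') (hn' : n' ≤ n)
    (γ : (Fin n → F) → Fin c) (δ : (Fin k → F) → Fin c) :
    Nat.card {ψ : (Fin k → F) →ₗ[F] (Fin n → F) //
        Function.Injective ⇑ψ ∧
          ∃ e : (Fin k → F) ≃ₗ[F] (Fin k → F), γ ∘ ⇑ψ = δ ∘ ⇑e} *
      Nat.card {φ : (Fin n' → F) →ₗ[F] (Fin n → F) // Function.Injective ⇑φ} *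
      Nat.card {ψ' : (Fin k → F) →ₗ[F] (Fin n' → F) // Function.Injective ⇑ψ'} =
    Nat.card {ψ : (Fin k → F) →ₗ[F] (Fin n → F) // Function.Injective ⇑ψ} *
      Nat.card {p : ((Fin n' → F) →ₗ[F] (Fin n → F)) × ((Fin k → F) →ₗ[F] (Fin n' → F)) //
        Function.Injective ⇑p.1 ∧ Function.Injective ⇑p.2 ∧
          ∃ e : (Fin k → F) ≃ₗ[F] (Fin k → F), γ ∘ ⇑p.1 ∘ ⇑p.2 = δ ∘ ⇑e} :=
  density_averaging_identity_general F c k n' n γ δ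
end

section
/- Let F be a finite field, r ≤ m positive integers, and A an r × m matrix over F of rank r. For n ∈ ℕ let S'(n) = {s : Fin m → Fⁿ : ∀ i, Σ_j A i j • s j = 0} be the set of solutions and S(n) = {s ∈ S'(n) : s i ≠ s j for all i ≠ j} the set of solutions with pairwise distinct entries. Assume S(n₀) ≠ ∅ for some n₀. Then |S(n)| / |S'(n)| → 1 as n → ∞. -/
open Filter

private lemma card_coordwise {F : Type*} [Field F] [Fintype F] {m n : ℕ}
    (K : Submodule F (Fin m → F)) :
    Nat.card {s : Fin m → (Fin n → F) // ∀ k, (fun j => s j k) ∈ K}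
      = Fintype.card F ^ (Module.finrank F K * n) := by
  have e : {s : Fin m → (Fin n → F) // ∀ k, (fun j => s j k) ∈ K} ≃ (Fin n → K) :=
    { toFun := fun s k => ⟨fun j => s.1 j k, s.2 k⟩
      invFun := fun f => ⟨fun j k => (f k).1 j, fun k => (f k).2⟩
      left_inv := fun s => rfl
      right_inv := fun f => rfl }
  haveI : Fintype K := Fintype.ofFinite K
  rw [Nat.card_congr e, Nat.card_pi]
  rw [Finset.prod_const, Finset.card_univ, Fintype.card_fin,
    Nat.card_eq_fintype_card, Module.card_eq_pow_finrank (K := F) (V := K), ← pow_mul]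

private lemma mem_ker_iff {F : Type*} [Field F] {r m n : ℕ}
    (A : Matrix (Fin r) (Fin m) F) (s : Fin m → (Fin n → F)) :
    (∀ i, ∑ j, A i j • s j = 0) ↔
      ∀ k, (fun j => s j k) ∈ LinearMap.ker A.mulVecLin := by
  simp only [LinearMap.mem_ker, Matrix.mulVecLin_apply, funext_iff, Matrix.mulVec,
    dotProduct, Finset.sum_apply, Pi.zero_apply, Pi.smul_apply, smul_eq_mul]
  exact ⟨fun h k i => h i k, fun h i k => h k i⟩

/-- For a full-rank linear system over a finite field which has a solution with
pairwise distinct entries in some dimension, asymptotically almost every solution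
in `Fⁿ` has pairwise distinct entries. -/
theorem distinct_solutions_density_tendsto_one (F : Type*) [Field F] [Fintype F]
    (r m : ℕ) (hr : 0 < r) (hrm : r ≤ m) (A : Matrix (Fin r) (Fin m) F)
    (hA : A.rank = r)
    (hsol : ∃ n₀ : ℕ, Nonempty {s : Fin m → (Fin n₀ → F) //
      (∀ i, ∑ j, A i j • s j = 0) ∧ Function.Injective s}) :
    Tendsto
      (fun n : ℕ =>
        (Nat.card {s : Fin m → (Fin n → F) //
            (∀ i, ∑ j, A i j • s j = 0) ∧ Function.Injective s} : ℝ) /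
          (Nat.card {s : Fin m → (Fin n → F) // ∀ i, ∑ j, A i j • s j = 0} : ℝ))
      atTop (nhds 1) := by
  classical
  set K : Submodule F (Fin m → F) := LinearMap.ker A.mulVecLin with hK
  set d : ℕ := m - r with hd
  have hker : Module.finrank F K = d := by
    show Module.finrank F (LinearMap.ker A.mulVecLin) = d
    have h := LinearMap.finrank_range_add_finrank_ker A.mulVecLin
    rw [Module.finrank_fintype_fun_eq_card, Fintype.card_fin] at h
    have hrank : Module.finrank F (LinearMap.range A.mulVecLin) = r := hA
    omega
  set Kp : Fin m × Fin m → Submodule F (Fin m → F) := fun p =>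
    K ⊓ LinearMap.ker
      ((LinearMap.proj (R := F) (φ := fun _ : Fin m => F) p.1 - LinearMap.proj (R := F) (φ := fun _ : Fin m => F) p.2)) with hKp
  have memKp : ∀ (p : Fin m × Fin m) (v : Fin m → F),
      v ∈ Kp p ↔ v ∈ K ∧ v p.1 = v p.2 := by
    intro p v
    show v ∈ K ⊓ LinearMap.ker
      ((LinearMap.proj (R := F) (φ := fun _ : Fin m => F) p.1 - LinearMap.proj (R := F) (φ := fun _ : Fin m => F) p.2)) ↔ _
    rw [Submodule.mem_inf]
    simp [LinearMap.mem_ker, LinearMap.sub_apply, LinearMap.proj_apply, sub_eq_zero]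
  have hpair : ∀ p : Fin m × Fin m, p.1 ≠ p.2 →
      Module.finrank F (Kp p) + 1 ≤ d := by
    intro p hp
    obtain ⟨n₀, ⟨s, hs, hinj⟩⟩ := hsol
    have hne : s p.1 ≠ s p.2 := fun h => hp (hinj h)
    obtain ⟨k, hk⟩ : ∃ k, s p.1 k ≠ s p.2 k := by
      by_contra h
      push_neg at h
      exact hne (funext h)
    set v : Fin m → F := fun j => s j k with hv
    have hvK : v ∈ K := (mem_ker_iff A s).1 hs k
    have hlt : Kp p < K := by
      refine lt_of_le_of_ne inf_le_left fun h => ?_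
      have : v ∈ Kp p := h ▸ hvK
      exact hk ((memKp p v).1 this).2
    have := Submodule.finrank_lt_finrank_of_lt hlt
    omega
  have cardSol : ∀ n : ℕ,
      Nat.card {s : Fin m → (Fin n → F) // ∀ i, ∑ j, A i j • s j = 0}
        = Fintype.card F ^ (d * n) := by
    intro n
    rw [Nat.card_congr (Equiv.subtypeEquivRight fun s => mem_ker_iff A s),
      card_coordwise K, hker]
  have cardBad : ∀ (n : ℕ) (p : Fin m × Fin m),
      Nat.card {s : Fin m → (Fin n → F) //
          (∀ i, ∑ j, A i j • s j = 0) ∧ s p.1 = s p.2}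
        = Fintype.card F ^ (Module.finrank F (Kp p) * n) := by
    intro n p
    rw [Nat.card_congr (Equiv.subtypeEquivRight fun s => ?_), card_coordwise (Kp p)]
    rw [mem_ker_iff A s]
    constructor
    · rintro ⟨h1, h2⟩ k
      exact (memKp p _).2 ⟨h1 k, congrFun h2 k⟩
    · intro h
      exact ⟨fun k => ((memKp p _).1 (h k)).1, funext fun k => ((memKp p _).1 (h k)).2⟩
  have count : ∀ n : ℕ,
      Nat.card {s : Fin m → (Fin n → F) // ∀ i, ∑ j, A i j • s j = 0}
        ≤ Nat.card {s : Fin m → (Fin n → F) //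
            (∀ i, ∑ j, A i j • s j = 0) ∧ Function.Injective s}
          + ∑ p ∈ (Finset.univ : Finset (Fin m)).offDiag,
              Nat.card {s : Fin m → (Fin n → F) //
                (∀ i, ∑ j, A i j • s j = 0) ∧ s p.1 = s p.2} := by
    intro n
    simp only [Nat.card_eq_fintype_card, Fintype.card_subtype]
    calc (Finset.univ.filter fun s : Fin m → (Fin n → F) =>
            ∀ i, ∑ j, A i j • s j = 0).card
        ≤ ((Finset.univ.filter fun s : Fin m → (Fin n → F) =>
              (∀ i, ∑ j, A i j • s j = 0) ∧ Function.Injective s)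
            ∪ (Finset.univ : Finset (Fin m)).offDiag.biUnion (fun p =>
                Finset.univ.filter fun s : Fin m → (Fin n → F) =>
                  (∀ i, ∑ j, A i j • s j = 0) ∧ s p.1 = s p.2)).card := by
          apply Finset.card_le_card
          intro s hs
          simp only [Finset.mem_filter, Finset.mem_univ, true_and] at hs
          rcases em (Function.Injective s) with h | h
          · exact Finset.mem_union_left _ (by simp [hs, h])
          · obtain ⟨a, b, hab, hne⟩ := Function.not_injective_iff.1 h
            refine Finset.mem_union_right _ (Finset.mem_biUnion.2 ⟨(a, b), ?_, ?_⟩)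
            · simp [Finset.mem_offDiag, hne]
            · simp [hs, hab]
      _ ≤ _ := le_trans (Finset.card_union_le _ _)
            (by gcongr; exact Finset.card_biUnion_le)
  set q : ℝ := (Fintype.card F : ℝ) with hq
  have hq1 : 1 < q := by rw [hq]; exact_mod_cast Fintype.one_lt_card (α := F)
  have hq0 : 0 < q := lt_trans one_pos hq1
  have hTpos : ∀ n : ℕ, (0 : ℝ) < q ^ (d * n) := fun n => pow_pos hq0 _
  have badBound : ∀ (n : ℕ) (p : Fin m × Fin m), p.1 ≠ p.2 →
      ((Fintype.card F ^ (Module.finrank F (Kp p) * n) : ℕ) : ℝ)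
        ≤ q ^ (d * n) / q ^ n := by
    intro n p hp
    rw [le_div_iff₀ (pow_pos hq0 n)]
    push_cast
    rw [← pow_add]
    apply pow_le_pow_right₀ (le_of_lt hq1)
    have h1 := hpair p hp
    calc Module.finrank F (Kp p) * n + n = (Module.finrank F (Kp p) + 1) * n := by ring
      _ ≤ d * n := Nat.mul_le_mul_right n h1
  have lower : ∀ n : ℕ,
      1 - (m * m : ℝ) * (q⁻¹) ^ n ≤
        (Nat.card {s : Fin m → (Fin n → F) //
            (∀ i, ∑ j, A i j • s j = 0) ∧ Function.Injective s} : ℝ) /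
          (Nat.card {s : Fin m → (Fin n → F) // ∀ i, ∑ j, A i j • s j = 0} : ℝ) := by
    intro n
    have hsum : (∑ p ∈ (Finset.univ : Finset (Fin m)).offDiag,
        (Nat.card {s : Fin m → (Fin n → F) //
          (∀ i, ∑ j, A i j • s j = 0) ∧ s p.1 = s p.2} : ℝ))
        ≤ (m * m : ℝ) * (q ^ (d * n) / q ^ n) := by
      calc (∑ p ∈ (Finset.univ : Finset (Fin m)).offDiag,
          (Nat.card {s : Fin m → (Fin n → F) //
            (∀ i, ∑ j, A i j • s j = 0) ∧ s p.1 = s p.2} : ℝ))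
          ≤ ∑ _p ∈ (Finset.univ : Finset (Fin m)).offDiag, q ^ (d * n) / q ^ n := by
            apply Finset.sum_le_sum
            intro p hp
            rw [cardBad n p]
            exact badBound n p (Finset.mem_offDiag.1 hp).2.2
        _ = ((Finset.univ : Finset (Fin m)).offDiag.card : ℝ) * (q ^ (d * n) / q ^ n) := by
            rw [Finset.sum_const, nsmul_eq_mul]
        _ ≤ (m * m : ℝ) * (q ^ (d * n) / q ^ n) := by
            apply mul_le_mul_of_nonneg_right _
              (le_of_lt (div_pos (hTpos n) (pow_pos hq0 n)))
            have hc : (Finset.univ : Finset (Fin m)).offDiag.card ≤ m * m := by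
              rw [Finset.offDiag_card, Finset.card_univ, Fintype.card_fin]
              exact Nat.sub_le _ _
            exact_mod_cast hc
    have hT : (Nat.card {s : Fin m → (Fin n → F) //
        ∀ i, ∑ j, A i j • s j = 0} : ℝ) = q ^ (d * n) := by
      rw [cardSol n]; push_cast; rfl
    have hcount' : (q ^ (d * n) : ℝ)
        ≤ (Nat.card {s : Fin m → (Fin n → F) //
            (∀ i, ∑ j, A i j • s j = 0) ∧ Function.Injective s} : ℝ)
          + ∑ p ∈ (Finset.univ : Finset (Fin m)).offDiag,
              (Nat.card {s : Fin m → (Fin n → F) //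
                (∀ i, ∑ j, A i j • s j = 0) ∧ s p.1 = s p.2} : ℝ) := by
      rw [← hT]
      exact_mod_cast count n
    rw [hT, le_div_iff₀ (hTpos n)]
    have e1 : (1 - (m * m : ℝ) * q⁻¹ ^ n) * q ^ (d * n)
        = q ^ (d * n) - (m * m : ℝ) * (q ^ (d * n) / q ^ n) := by
      rw [inv_pow]
      field_simp
    rw [e1]
    linarith
  have upper : ∀ n : ℕ,
      (Nat.card {s : Fin m → (Fin n → F) //
          (∀ i, ∑ j, A i j • s j = 0) ∧ Function.Injective s} : ℝ) /
        (Nat.card {s : Fin m → (Fin n → F) // ∀ i, ∑ j, A i j • s j = 0} : ℝ) ≤ 1 := by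
    intro n
    have hT : (Nat.card {s : Fin m → (Fin n → F) //
        ∀ i, ∑ j, A i j • s j = 0} : ℝ) = q ^ (d * n) := by
      rw [cardSol n]; push_cast; rfl
    rw [div_le_one (hT ▸ hTpos n)]
    have : Nat.card {s : Fin m → (Fin n → F) //
          (∀ i, ∑ j, A i j • s j = 0) ∧ Function.Injective s}
        ≤ Nat.card {s : Fin m → (Fin n → F) // ∀ i, ∑ j, A i j • s j = 0} :=
      Nat.card_le_card_of_injective (fun s => ⟨s.1, s.2.1⟩)
        (fun a b h => Subtype.ext (by simpa using congrArg Subtype.val h))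
    exact_mod_cast this
  have hlow : Tendsto (fun n : ℕ => 1 - (m * m : ℝ) * q⁻¹ ^ n) atTop (nhds 1) := by
    have h0 : Tendsto (fun n : ℕ => (q⁻¹ : ℝ) ^ n) atTop (nhds 0) :=
      tendsto_pow_atTop_nhds_zero_of_lt_one (by positivity) (inv_lt_one_of_one_lt₀ hq1)
    have h1 := h0.const_mul ((m * m : ℝ))
    have h2 := tendsto_const_nhds (x := (1 : ℝ)) (f := atTop (α := ℕ)) |>.sub h1
    simpa using h2
  exact tendsto_of_tendsto_of_tendsto_of_le_of_le hlow tendsto_const_nhds lower upper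
end

section
/- Let F be a finite field, r ≤ m positive integers, and A an r × m matrix over F of rank r which is invariant, i.e. Σ_{j} A i j = 0 for every row i (equivalently, s + a is a solution whenever s is a solution and a ∈ Fⁿ is added to every entry). (i) For every n and every solution s : Fin m → Fⁿ, the affine span of the entries {s j : j ∈ Fin m} has dimension at most m − r − 1; equivalently, the linear span of {s j − s 0 : j ∈ Fin m} has dimension at most m − r − 1. (ii) For every n ≥ m − r − 1 there exists a solution whose entries have affine span of dimension exactly m − r − 1. -/
/-!
Collect a solution `s` into the `m × n` matrix whose columns `k ↦ (j ↦ s j k)` lie in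
`K = ker A`; invariance says `1 ∈ K`. Since row rank equals column rank, the span of the
rows `s j - s j₀` has the dimension of the span of the columns after subtracting their
`j₀`-entry, i.e. of their images under the projection `w ↦ w - w j₀ • 1`. Its kernel `F ∙ 1`
lies in `K`, so the image of `K` has dimension `(m - r) - 1`: this bounds every solution, and
a solution whose columns span that image attains the bound.
-/

open Module Submodule Matrix

section normalizeAt

variable {R ι : Type*} [CommRing R] (j₀ : ι)

def normalizeAt : (ι → R) →ₗ[R] ι → R :=
  LinearMap.id - (LinearMap.proj j₀).smulRight 1

@[simp]
theorem normalizeAt_apply (w : ι → R) (j : ι) : normalizeAt j₀ w j = w j - w j₀ := by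
  simp [normalizeAt]

@[simp]
theorem normalizeAt_normalizeAt (w : ι → R) :
    normalizeAt j₀ (normalizeAt j₀ w) = normalizeAt j₀ w := by
  ext j
  simp

theorem ker_normalizeAt : LinearMap.ker (normalizeAt j₀) = R ∙ (1 : ι → R) := by
  ext w
  simp only [LinearMap.mem_ker, mem_span_singleton, funext_iff, normalizeAt_apply,
    Pi.zero_apply, sub_eq_zero, Pi.smul_apply, Pi.one_apply, smul_eq_mul, mul_one]
  exact ⟨fun h => ⟨w j₀, fun j => (h j).symm⟩, fun ⟨a, ha⟩ j => by rw [← ha, ← ha]⟩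

variable {j₀}

theorem normalizeAt_of_mem_range {w : ι → R} (hw : w ∈ LinearMap.range (normalizeAt j₀)) :
    normalizeAt j₀ w = w := by
  obtain ⟨v, rfl⟩ := hw
  exact normalizeAt_normalizeAt j₀ v

theorem map_normalizeAt_le {K : Submodule R (ι → R)} (h1 : (1 : ι → R) ∈ K) :
    K.map (normalizeAt j₀) ≤ K := by
  rintro _ ⟨w, hw, rfl⟩
  exact K.sub_mem hw (K.smul_mem _ h1)

theorem finrank_map_normalizeAt {F : Type*} [Field F] {K : Submodule F (ι → F)}
    [FiniteDimensional F K] (h1 : (1 : ι → F) ∈ K) :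
    finrank F (K.map (normalizeAt j₀)) = finrank F K - 1 := by
  have h := LinearMap.finrank_range_add_finrank_ker ((normalizeAt j₀).domRestrict K)
  have hle : F ∙ (1 : ι → F) ≤ K := (span_singleton_le_iff_mem _ _).2 h1
  rw [LinearMap.range_domRestrict, LinearMap.ker_domRestrict, ker_normalizeAt,
    (comapSubtypeEquivOfLe hle).finrank_eq,
    finrank_span_singleton fun h => one_ne_zero (congrFun h j₀)] at h
  omega

end normalizeAt

theorem finrank_span_range_eq_finrank_span_range_swap {F ι κ : Type*} [Field F] [Finite ι]
    [Fintype κ] (s : ι → κ → F) :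
    finrank F (span F (Set.range s)) = finrank F (span F (Set.range fun k j => s j k)) :=
  (Matrix.of s).rank_eq_finrank_span_row.symm.trans (Matrix.of s).rank_eq_finrank_span_cols

theorem finrank_span_range_sub_eq {F ι κ : Type*} [Field F] [Finite ι] [Fintype κ]
    (s : ι → κ → F) (j₀ : ι) :
    finrank F (span F (Set.range fun j => s j - s j₀)) =
      finrank F (span F (Set.range fun k => normalizeAt j₀ fun j => s j k)) := by
  have hcols : (fun k j => (s j - s j₀) k) = fun k => normalizeAt j₀ fun j => s j k := by
    ext k j
    simp
  rw [finrank_span_range_eq_finrank_span_range_swap, hcols]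

theorem Submodule.exists_fin_span_range_eq {K V : Type*} [DivisionRing K] [AddCommGroup V]
    [Module K V] (W : Submodule K V) [FiniteDimensional K W] {n : ℕ} (hn : finrank K W ≤ n) :
    ∃ v : Fin n → V, span K (Set.range v) = W := by
  classical
  let b := finBasis K W
  refine ⟨fun k => if h : (k : ℕ) < finrank K W then b ⟨k, h⟩ else 0, le_antisymm ?_ ?_⟩
  · rw [span_le]
    rintro _ ⟨k, rfl⟩
    dsimp only
    split_ifs
    exacts [(b _).2, W.zero_mem]
  · calc W = (span K (Set.range b)).map W.subtype := by rw [b.span_eq, map_subtype_top]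
      _ ≤ _ := by
        rw [map_span, ← Set.range_comp]
        refine span_mono ?_
        rintro _ ⟨i, rfl⟩
        exact ⟨Fin.castLE hn i, by simp⟩

theorem Matrix.forall_sum_smul_eq_zero_iff {R ρ ι κ : Type*} [Semiring R] [Fintype ι]
    (A : Matrix ρ ι R) (s : ι → κ → R) :
    (∀ i, ∑ j, A i j • s j = 0) ↔ ∀ k, A *ᵥ (fun j => s j k) = 0 := by
  simp only [funext_iff, mulVec, dotProduct, Finset.sum_apply, Pi.smul_apply, smul_eq_mul,
    Pi.zero_apply]
  exact forall_comm

theorem Matrix.finrank_ker_mulVecLin {F m n : Type*} [Field F] [Fintype n] (A : Matrix m n F) :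
    finrank F (LinearMap.ker A.mulVecLin) = Fintype.card n - A.rank := by
  have := LinearMap.finrank_range_add_finrank_ker A.mulVecLin
  rw [finrank_fintype_fun_eq_card] at this
  unfold Matrix.rank
  omega

theorem invariant_solution_affine_span_dimension_bound_general (F : Type*) [Field F]
    (r m : ℕ) (hr : 0 < r) (hrm : r ≤ m) (A : Matrix (Fin r) (Fin m) F)
    (hA : A.rank = r) (hinv : ∀ i, ∑ j, A i j = 0) :
    (∀ (n : ℕ) (s : Fin m → (Fin n → F)), (∀ i, ∑ j, A i j • s j = 0) →
        Module.finrank F (Submodule.span F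
            (Set.range fun j => s j - s ⟨0, hr.trans_le hrm⟩)) ≤ m - r - 1) ∧
      (∀ n : ℕ, m - r - 1 ≤ n →
        ∃ s : Fin m → (Fin n → F), (∀ i, ∑ j, A i j • s j = 0) ∧
          Module.finrank F (Submodule.span F
              (Set.range fun j => s j - s ⟨0, hr.trans_le hrm⟩)) = m - r - 1) := by
  set j₀ : Fin m := ⟨0, hr.trans_le hrm⟩
  set K := LinearMap.ker A.mulVecLin
  have h1 : (1 : Fin m → F) ∈ K := by
    ext i
    simpa [K, mulVec, dotProduct] using hinv i
  have hdim : finrank F (K.map (normalizeAt j₀)) = m - r - 1 := by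
    rw [finrank_map_normalizeAt h1, finrank_ker_mulVecLin, hA, Fintype.card_fin]
  refine ⟨fun n s hs => ?_, fun n hn => ?_⟩
  · rw [finrank_span_range_sub_eq, ← hdim]
    refine finrank_mono (span_le.2 ?_)
    rintro _ ⟨k, rfl⟩
    exact mem_map_of_mem ((forall_sum_smul_eq_zero_iff A s).1 hs k)
  · obtain ⟨c, hc⟩ := (K.map (normalizeAt j₀)).exists_fin_span_range_eq (hdim ▸ hn)
    have hcK : ∀ k, c k ∈ K.map (normalizeAt j₀) := fun k => hc ▸ subset_span ⟨k, rfl⟩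
    refine ⟨fun j k => c k j, (forall_sum_smul_eq_zero_iff A _).2 fun k => ?_, ?_⟩
    · exact map_normalizeAt_le h1 (hcK k)
    · have hfix : (fun k => normalizeAt j₀ (c k)) = c :=
        funext fun k => normalizeAt_of_mem_range (LinearMap.map_le_range (hcK k))
      rw [finrank_span_range_sub_eq, hfix, hc, hdim]

/-- Dimension bound for solutions of an invariant full-rank linear system over a
finite field (the columns of `A` sum to zero): (i) the affine span of the entries of
any solution in `Fⁿ` — i.e. the linear span of the differences `s j − s 0` — has
dimension at most `m − r − 1`, and (ii) for every `n ≥ m − r − 1` there is a solution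
whose entries have affine span of dimension exactly `m − r − 1`. -/
theorem invariant_solution_affine_span_dimension_bound (F : Type*) [Field F] [Fintype F]
    (r m : ℕ) (hr : 0 < r) (hrm : r ≤ m) (A : Matrix (Fin r) (Fin m) F)
    (hA : A.rank = r) (hinv : ∀ i, ∑ j, A i j = 0) :
    (∀ (n : ℕ) (s : Fin m → (Fin n → F)), (∀ i, ∑ j, A i j • s j = 0) →
        Module.finrank F (Submodule.span F
            (Set.range fun j => s j - s ⟨0, hr.trans_le hrm⟩)) ≤ m - r - 1) ∧
      (∀ n : ℕ, m - r - 1 ≤ n →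
        ∃ s : Fin m → (Fin n → F), (∀ i, ∑ j, A i j • s j = 0) ∧
          Module.finrank F (Submodule.span F
              (Set.range fun j => s j - s ⟨0, hr.trans_le hrm⟩)) = m - r - 1) :=
  invariant_solution_affine_span_dimension_bound_general F r m hr hrm A hA hinv
end
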